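/- arXiv:2504.06215 — 2 statements merged into one kernel-verified Lean document; each statement's English description precedes it below -/
import Mathlib

section
/- (Imputability for the buyer-spillover test.) Assume local interference so that Y_{i,j}(W) = Y_{i,j}(w_i^B, w_j^S), and assume the null hypothesis H_0^{buyer}: Y_{i,j}(0,0) = Y_{i,j}(1,0) for all i, j. Let W = w^B(w^S)^⊤ and W' = v(w^S)^⊤ with v ∈ {0,1}^I and ∑_i v_i = ∑_i w_i^B. Then the difference-in-means statistic restricted to pairs with untreated sellers satisfies T(W' | Y(W)) = T(W' | Y(W')), where T(W' | Y) = (1/n_1)∑_{(i,j)} Y_{i,j}(1−w_j^S)v_i − (1/n_0)∑_{(i,j)} Y_{i,j}(1−w_j^S)(1−v_i) with n_1 = ∑_{(i,j)}(1−w_j^S)v_i and n_0 = ∑_{(i,j)}(1−w_j^S)(1−v_i). -/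
open Finset

/-- Imputability of the difference-in-means statistic for the buyer-spillover
test: under local interference and `H₀^{buyer}`, the statistic computed from
outcomes generated by `W = w^B (w^S)ᵀ` agrees with the one computed from
outcomes generated by `W' = v (w^S)ᵀ`. -/
theorem stmt7 (I J : ℕ) (Y : Fin I → Fin J → ℝ → ℝ → ℝ)
    (wB v : Fin I → ℝ) (wS : Fin J → ℝ)
    (hB : ∀ i, wB i = 0 ∨ wB i = 1) (hv : ∀ i, v i = 0 ∨ v i = 1)
    (hS : ∀ j, wS j = 0 ∨ wS j = 1)
    (hsum : ∑ i, v i = ∑ i, wB i)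
    (hnull : ∀ i j, Y i j 0 0 = Y i j 1 0)
    (n1 n0 : ℝ)
    (hn1 : n1 = ∑ i, ∑ j, (1 - wS j) * v i)
    (hn0 : n0 = ∑ i, ∑ j, (1 - wS j) * (1 - v i))
    (hn1pos : 0 < n1) (hn0pos : 0 < n0) :
    (1 / n1) * (∑ i, ∑ j, Y i j (wB i) (wS j) * (1 - wS j) * v i)
        - (1 / n0) * (∑ i, ∑ j, Y i j (wB i) (wS j) * (1 - wS j) * (1 - v i))
      = (1 / n1) * (∑ i, ∑ j, Y i j (v i) (wS j) * (1 - wS j) * v i)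
        - (1 / n0) * (∑ i, ∑ j, Y i j (v i) (wS j) * (1 - wS j) * (1 - v i)) := by
  have key : ∀ i j, Y i j (wB i) (wS j) * (1 - wS j) = Y i j (v i) (wS j) * (1 - wS j) := by
    intro i j
    rcases hS j with h | h
    · rw [h]
      have h1 : Y i j (wB i) 0 = Y i j 0 0 := by
        rcases hB i with hb | hb <;> rw [hb]
        exact (hnull i j).symm
      have h2 : Y i j (v i) 0 = Y i j 0 0 := by
        rcases hv i with hb | hb <;> rw [hb]
        exact (hnull i j).symm
      rw [h1, h2]
    · rw [h]; ring
  congr 1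
  · congr 1
    exact Finset.sum_congr rfl fun i _ => Finset.sum_congr rfl fun j _ => by
      rw [key i j]
  · congr 1
    exact Finset.sum_congr rfl fun i _ => Finset.sum_congr rfl fun j _ => by
      rw [key i j]
end

section
/- (Imputability for the total-effect test.) Assume local interference and the null H_0^{total}: Y_{i,j}(0,0) = Y_{i,j}(1,1) for all i, j. Let U be a set of pairs (i,j) such that for the assignments W = w^B(w^S)^⊤ and W' = v^B(v^S)^⊤ we have w_i^B = w_j^S and v_i^B = v_j^S for all (i,j) ∈ U. Then the difference-in-means statistic over U satisfies T(W' | Y(W)) = T(W' | Y(W')), where T(W' | Y) = (1/n_1)∑_{(i,j)∈U} Y_{i,j} v_j^S v_i^B − (1/n_0)∑_{(i,j)∈U} Y_{i,j}(1−v_j^S)(1−v_i^B), with n_1 = ∑_{(i,j)∈U} v_j^S v_i^B and n_0 = ∑_{(i,j)∈U}(1−v_j^S)(1−v_i^B). -/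
open Finset

/-- Imputability of the difference-in-means statistic for the total-effect
test over a set `U` of focal pairs on which buyer and seller treatments agree
(for both the observed assignment and the resampled assignment), under
`H₀^{total}`. -/
theorem stmt8 (I J : ℕ) (Y : Fin I → Fin J → ℝ → ℝ → ℝ)
    (wB : Fin I → ℝ) (wS : Fin J → ℝ) (vB : Fin I → ℝ) (vS : Fin J → ℝ)
    (hwB : ∀ i, wB i = 0 ∨ wB i = 1) (hwS : ∀ j, wS j = 0 ∨ wS j = 1)
    (hvB : ∀ i, vB i = 0 ∨ vB i = 1) (hvS : ∀ j, vS j = 0 ∨ vS j = 1)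
    (U : Finset (Fin I × Fin J))
    (hU : ∀ p ∈ U, wB p.1 = wS p.2 ∧ vB p.1 = vS p.2)
    (hnull : ∀ i j, Y i j 0 0 = Y i j 1 1)
    (n1 n0 : ℝ)
    (hn1 : n1 = ∑ p ∈ U, vS p.2 * vB p.1)
    (hn0 : n0 = ∑ p ∈ U, (1 - vS p.2) * (1 - vB p.1))
    (hn1pos : 0 < n1) (hn0pos : 0 < n0) :
    (1 / n1) * (∑ p ∈ U, Y p.1 p.2 (wB p.1) (wS p.2) * vS p.2 * vB p.1)
        - (1 / n0) * (∑ p ∈ U, Y p.1 p.2 (wB p.1) (wS p.2) * (1 - vS p.2) * (1 - vB p.1))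
      = (1 / n1) * (∑ p ∈ U, Y p.1 p.2 (vB p.1) (vS p.2) * vS p.2 * vB p.1)
        - (1 / n0) * (∑ p ∈ U, Y p.1 p.2 (vB p.1) (vS p.2) * (1 - vS p.2) * (1 - vB p.1)) := by
  have key : ∀ p ∈ U, Y p.1 p.2 (wB p.1) (wS p.2) = Y p.1 p.2 (vB p.1) (vS p.2) := by
    intro p hp
    obtain ⟨h1, h2⟩ := hU p hp
    rcases hwB p.1 with hw | hw <;> rcases hvB p.1 with hv | hv <;>
      rw [hw, hv, ← h1, ← h2, hw, hv] <;> simp [hnull]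
  have e1 : ∑ p ∈ U, Y p.1 p.2 (wB p.1) (wS p.2) * vS p.2 * vB p.1
      = ∑ p ∈ U, Y p.1 p.2 (vB p.1) (vS p.2) * vS p.2 * vB p.1 :=
    Finset.sum_congr rfl (fun p hp => by rw [key p hp])
  have e2 : ∑ p ∈ U, Y p.1 p.2 (wB p.1) (wS p.2) * (1 - vS p.2) * (1 - vB p.1)
      = ∑ p ∈ U, Y p.1 p.2 (vB p.1) (vS p.2) * (1 - vS p.2) * (1 - vB p.1) :=
    Finset.sum_congr rfl (fun p hp => by rw [key p hp])
  rw [e1, e2]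
end
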